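/- Let n ≥ 2 and q ≥ 1, and let S_n act on ℝ^{n×q} by permuting rows: (σ·W)_{ij} = W_{σ⁻¹(i),j}. Then the real vector space of linear maps T : ℝ^{n×q} → ℝ^{n×q} satisfying T(σ·W) = σ·T(W) for all σ ∈ S_n and W ∈ ℝ^{n×q} has dimension exactly 2q². -/
import Mathlib


open Matrix

namespace RowPerm

variable (n q : ℕ)

/-- The action of `Sₙ` on `n × q` matrices by permuting rows:
`(σ · W) i j = W (σ⁻¹ i) j`. -/
def act (σ : Equiv.Perm (Fin n)) (W : Matrix (Fin n) (Fin q) ℝ) :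
    Matrix (Fin n) (Fin q) ℝ :=
  Matrix.of fun i j => W (σ⁻¹ i) j

theorem act_add (σ : Equiv.Perm (Fin n)) (X Y : Matrix (Fin n) (Fin q) ℝ) :
    act n q σ (X + Y) = act n q σ X + act n q σ Y := by
  ext i j; simp [act]

theorem act_smul (σ : Equiv.Perm (Fin n)) (c : ℝ) (X : Matrix (Fin n) (Fin q) ℝ) :
    act n q σ (c • X) = c • act n q σ X := by
  ext i j; simp [act]

/-- The space of `Sₙ`-equivariant (rows-permutation) linear endomorphisms of
`ℝ^{n×q}`. -/
noncomputable def EquivariantMaps :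
    Submodule ℝ (Matrix (Fin n) (Fin q) ℝ →ₗ[ℝ] Matrix (Fin n) (Fin q) ℝ) where
  carrier := {T | ∀ (σ : Equiv.Perm (Fin n)) (W : Matrix (Fin n) (Fin q) ℝ),
    T (act n q σ W) = act n q σ (T W)}
  zero_mem' := by
    intro σ W
    simp only [LinearMap.zero_apply]
    ext i j; simp [act]
  add_mem' := by
    intro T T' hT hT' σ W
    simp [LinearMap.add_apply, hT σ W, hT' σ W, act_add]
  smul_mem' := by
    intro c T hT σ W
    simp [LinearMap.smul_apply, hT σ W, act_smul]

noncomputable def Tmap (A B : Matrix (Fin q) (Fin q) ℝ) :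
    Matrix (Fin n) (Fin q) ℝ →ₗ[ℝ] Matrix (Fin n) (Fin q) ℝ where
  toFun W := Matrix.of fun i j => (∑ k, W i k * A j k) + ∑ k, (∑ i', W i' k) * B j k
  map_add' X Y := by
    ext i j
    simp [Finset.sum_add_distrib, add_mul]
    ring
  map_smul' c X := by
    ext i j
    simp only [Matrix.smul_apply, smul_eq_mul, RingHom.id_apply, Matrix.of_apply, mul_add,
      Finset.mul_sum]
    congr 1
    · exact Finset.sum_congr rfl fun k _ => by ring
    · exact Finset.sum_congr rfl fun k _ => by rw [← Finset.mul_sum]; ring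

lemma Tmap_mem (A B : Matrix (Fin q) (Fin q) ℝ) : Tmap n q A B ∈ EquivariantMaps n q := by
  intro σ W
  ext i j
  simp only [Tmap, act, LinearMap.coe_mk, AddHom.coe_mk, Matrix.of_apply]
  congr 2
  ext k
  congr 1
  exact Equiv.sum_comp σ⁻¹ fun i' => W i' k

lemma act_std (i0 i : Fin n) (k : Fin q) :
    act n q (Equiv.swap i0 i) (Matrix.single i0 k (1:ℝ)) =
      Matrix.single i k 1 := by
  ext a b
  simp only [act, Matrix.single, Matrix.of_apply, Equiv.Perm.inv_def,
    Equiv.symm_swap]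
  congr 1
  simp only [eq_iff_iff, and_congr_left_iff]
  intro _
  constructor
  · intro h
    have := congrArg (Equiv.swap i0 i) h
    simpa [Equiv.swap_apply_left, Equiv.swap_apply_self] using this
  · rintro rfl
    simp [Equiv.swap_apply_right]

lemma act_std_fix (i0 : Fin n) (k : Fin q) (τ : Equiv.Perm (Fin n)) (hτ : τ i0 = i0) :
    act n q τ (Matrix.single i0 k (1:ℝ)) = Matrix.single i0 k 1 := by
  ext a b
  simp only [act, Matrix.single, Matrix.of_apply]
  congr 1
  simp only [eq_iff_iff, and_congr_left_iff]
  intro _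
  constructor
  · intro h
    have h2 : a = τ i0 := by rw [h]; simp
    rw [h2, hτ]
  · intro h
    subst h
    have := congrArg (⇑τ⁻¹) hτ
    simpa using this

lemma const_off (T : Matrix (Fin n) (Fin q) ℝ →ₗ[ℝ] Matrix (Fin n) (Fin q) ℝ)
    (hT : T ∈ EquivariantMaps n q) (i0 i1 : Fin n) (h01 : i0 ≠ i1)
    (k j : Fin q) (m : Fin n) (hm : m ≠ i0) :
    T (Matrix.single i0 k 1) m j = T (Matrix.single i0 k 1) i1 j := by
  rcases eq_or_ne m i1 with rfl | hmi
  · rfl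
  have hτ0 : Equiv.swap i1 m i0 = i0 :=
    Equiv.swap_apply_of_ne_of_ne h01 (Ne.symm hm)
  have hact := act_std_fix n q i0 k (Equiv.swap i1 m) hτ0
  have h1 := hT (Equiv.swap i1 m) (Matrix.single i0 k 1)
  rw [hact] at h1
  have h2 := congrFun (congrFun h1 i1) j
  simpa [act, Equiv.swap_apply_left] using h2.symm

lemma eval_std (T : Matrix (Fin n) (Fin q) ℝ →ₗ[ℝ] Matrix (Fin n) (Fin q) ℝ)
    (hT : T ∈ EquivariantMaps n q) (i0 i1 : Fin n) (h01 : i0 ≠ i1)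
    (i i' : Fin n) (k j : Fin q) :
    T (Matrix.single i k 1) i' j =
      if i' = i then T (Matrix.single i0 k 1) i0 j
      else T (Matrix.single i0 k 1) i1 j := by
  have hTE : T (Matrix.single i k 1)
      = act n q (Equiv.swap i0 i) (T (Matrix.single i0 k 1)) := by
    rw [← act_std n q i0 i k, hT]
  have h2 : T (Matrix.single i k 1) i' j
      = T (Matrix.single i0 k 1) (Equiv.swap i0 i i') j := by
    rw [hTE]; simp [act]
  rw [h2]
  by_cases hi : i' = i
  · subst hi
    rw [if_pos rfl, Equiv.swap_apply_right]
  · rw [if_neg hi]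
    apply const_off n q T hT i0 i1 h01
    intro hme
    apply hi
    have : Equiv.swap i0 i i' = Equiv.swap i0 i i := by
      rw [hme, Equiv.swap_apply_right]
    exact (Equiv.swap i0 i).injective this

noncomputable def Phi :
    (Matrix (Fin q) (Fin q) ℝ × Matrix (Fin q) (Fin q) ℝ) →ₗ[ℝ] EquivariantMaps n q where
  toFun p := ⟨Tmap n q p.1 p.2, Tmap_mem n q p.1 p.2⟩
  map_add' p p' := by
    apply Subtype.ext
    apply LinearMap.ext
    intro W
    ext i j
    simp only [Tmap, Prod.fst_add, Prod.snd_add, Submodule.coe_add, LinearMap.add_apply,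
      LinearMap.coe_mk, AddHom.coe_mk, Matrix.of_apply, Matrix.add_apply, mul_add, add_mul]
    rw [Finset.sum_add_distrib, Finset.sum_add_distrib]
    ring
  map_smul' c p := by
    apply Subtype.ext
    apply LinearMap.ext
    intro W
    ext i j
    simp only [Tmap, Prod.smul_fst, Prod.smul_snd, SetLike.val_smul, LinearMap.smul_apply,
      LinearMap.coe_mk, AddHom.coe_mk, Matrix.of_apply, Matrix.smul_apply, smul_eq_mul,
      RingHom.id_apply, mul_add, Finset.mul_sum]
    congr 1
    · exact Finset.sum_congr rfl fun k _ => by ring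
    · exact Finset.sum_congr rfl fun k _ => by ring

/-- For `n ≥ 2` and `q ≥ 1`, the space of `Sₙ`-equivariant
linear endomorphisms of `ℝ^{n×q}` (rows permuted) has dimension exactly `2q²`. -/
theorem finrank_equivariantMaps_eq_two_q_sq (hn : 2 ≤ n) (hq : 1 ≤ q) :
    Module.finrank ℝ (EquivariantMaps n q) = 2 * q ^ 2 := by
  classical
  set i0 : Fin n := ⟨0, by omega⟩ with hi0
  set i1 : Fin n := ⟨1, by omega⟩ with hi1
  have h01 : i0 ≠ i1 := by simp [hi0, hi1, Fin.ext_iff]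
  have hinj : Function.Injective (Phi n q) := by
    rw [injective_iff_map_eq_zero]
    intro p hp
    have h0 : Tmap n q p.1 p.2 = 0 := congrArg Subtype.val hp
    have hB : ∀ j k, p.2 j k = 0 := by
      intro j k
      have h := congrFun (congrFun (LinearMap.congr_fun h0 (Matrix.single i0 k (1:ℝ))) i1) j
      simpa [Tmap, Matrix.single, ite_and, Finset.sum_ite_eq, h01, h01.symm] using h
    have hA : ∀ j k, p.1 j k = 0 := by
      intro j k
      have h := congrFun (congrFun (LinearMap.congr_fun h0 (Matrix.single i0 k (1:ℝ))) i0) j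
      simp [Tmap, Matrix.single, ite_and, Finset.sum_ite_eq, hB j k] at h
      exact h
    refine Prod.ext ?_ ?_ <;> ext j k
    · exact hA j k
    · exact hB j k
  have hsurj : Function.Surjective (Phi n q) := by
    rintro ⟨T, hT⟩
    refine ⟨(Matrix.of fun j k => T (Matrix.single i0 k 1) i0 j
              - T (Matrix.single i0 k 1) i1 j,
             Matrix.of fun j k => T (Matrix.single i0 k 1) i1 j), ?_⟩
    apply Subtype.ext
    apply LinearMap.ext
    intro W
    ext i j
    have hW : T W = ∑ i' : Fin n, ∑ k : Fin q, W i' k • T (Matrix.single i' k 1) := by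
      conv_lhs => rw [Matrix.matrix_eq_sum_single W]
      rw [map_sum]
      refine Finset.sum_congr rfl fun i' _ => ?_
      rw [map_sum]
      refine Finset.sum_congr rfl fun k _ => ?_
      rw [show Matrix.single i' k (W i' k) = W i' k • Matrix.single i' k (1:ℝ)
            by simp, LinearMap.map_smul]
    show (Tmap n q _ _) W i j = T W i j
    rw [hW]
    simp only [Tmap, LinearMap.coe_mk, AddHom.coe_mk, Matrix.of_apply, Matrix.sum_apply,
      Matrix.smul_apply, smul_eq_mul]
    have key : ∀ (i' : Fin n) (k : Fin q), T (Matrix.single i' k 1) i j =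
        if i = i' then T (Matrix.single i0 k 1) i0 j
        else T (Matrix.single i0 k 1) i1 j :=
      fun i' k => eval_std n q T hT i0 i1 h01 i' i k j
    simp only [key]
    rw [Finset.sum_comm, ← Finset.sum_add_distrib]
    refine Finset.sum_congr rfl fun k _ => ?_
    have split : ∀ i' : Fin n,
        W i' k * (if i = i' then T (Matrix.single i0 k 1) i0 j
          else T (Matrix.single i0 k 1) i1 j)
        = W i' k * T (Matrix.single i0 k 1) i1 j
          + (if i = i' then W i' k * (T (Matrix.single i0 k 1) i0 j
              - T (Matrix.single i0 k 1) i1 j) else 0) := by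
      intro i'; split_ifs <;> ring
    simp only [split, Finset.sum_add_distrib, Finset.sum_ite_eq, Finset.mem_univ, if_true,
      ← Finset.sum_mul]
    ring
  have e : (Matrix (Fin q) (Fin q) ℝ × Matrix (Fin q) (Fin q) ℝ) ≃ₗ[ℝ] EquivariantMaps n q :=
    LinearEquiv.ofBijective (Phi n q) ⟨hinj, hsurj⟩
  rw [← LinearEquiv.finrank_eq e, Module.finrank_prod]
  simp [Module.finrank_matrix]
  ring

end RowPerm
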